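/- arXiv:1308.2536 — 3 statements merged into one kernel-verified Lean document; each statement's English description precedes it below -/
import Mathlib

section
/- Let ξ, g, g† ∈ L¹(M) with M a measure space, and suppose M = M₁ ∪ M₂ is a partition into measurable sets with ‖ξ‖_{L¹(M₁)} ≤ ε, |M₂| ≤ η, and g - g† ∈ L^∞(M). Let g^obs = g† + ξ. Then ‖g - g^obs‖_{L¹(M)} - ‖ξ‖_{L¹(M)} ≥ ‖g - g†‖_{L¹(M)} - 2(ε + η‖g - g†‖_{L^∞(M₂)}). -/
/-! On `M₁` the triangle inequality gives `|d - ξ| ≥ |d| - |ξ|`, on `M₂` it gives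
`|d - ξ| ≥ |ξ| - |d|`, where `d = g - g†`. Integrating, the data error falls short
of `‖d‖₁ + ‖ξ‖₁` by at most twice `‖ξ‖_{L¹(M₁)} + ‖d‖_{L¹(M₂)}`, and the last term is at most
`|M₂| ‖d‖_{L^∞(M₂)}`. -/

open MeasureTheory
open scoped ENNReal

namespace MeasureTheory

variable {α E : Type*} [MeasurableSpace α] [NormedAddCommGroup E] {μ : Measure α}

theorem integral_norm_sub_integral_norm_le {f h : α → E} (hf : Integrable f μ)
    (hh : Integrable h μ) :
    ∫ x, ‖f x‖ ∂μ - ∫ x, ‖h x‖ ∂μ ≤ ∫ x, ‖f x - h x‖ ∂μ := by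
  rw [← integral_sub hf.norm hh.norm]
  exact integral_mono (hf.norm.sub hh.norm) (hf.sub hh).norm fun x => norm_sub_norm_le _ _

theorem le_integral_norm_sub_sub_integral_norm {f h : α → E} (hf : Integrable f μ)
    (hh : Integrable h μ) {s : Set α} (hs : MeasurableSet s) :
    ∫ x, ‖f x‖ ∂μ - 2 * (∫ x in sᶜ, ‖h x‖ ∂μ + ∫ x in s, ‖f x‖ ∂μ) ≤
      ∫ x, ‖f x - h x‖ ∂μ - ∫ x, ‖h x‖ ∂μ := by
  have off_s := integral_norm_sub_integral_norm_le hf.restrict (μ := μ.restrict sᶜ) hh.restrict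
  have on_s := integral_norm_sub_integral_norm_le hh.restrict (μ := μ.restrict s) hf.restrict
  simp only [norm_sub_rev (h _)] at on_s
  rw [← integral_add_compl hs hf.norm, ← integral_add_compl hs hh.norm,
    ← integral_add_compl hs (f := fun x => ‖f x - h x‖) (hf.sub hh).norm]
  linarith

theorem setIntegral_norm_le_measureReal_mul_eLpNorm_top {f : α → E} {s : Set α}
    (hs : μ s < ∞) (hf : MemLp f ∞ (μ.restrict s)) :
    ∫ x in s, ‖f x‖ ∂μ ≤ μ.real s * (eLpNorm f ∞ (μ.restrict s)).toReal := by
  have bound := norm_setIntegral_le_of_norm_le_const_ae (f := fun x => ‖f x‖) hs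
    (by simpa only [norm_norm] using ae_le_lpNorm_exponent_top hf)
  rw [toReal_eLpNorm hf.aestronglyMeasurable, mul_comm]
  exact (le_abs_self _).trans bound

end MeasureTheory

theorem impulsive_noise_data_error_bound_general
    {M : Type*} [MeasurableSpace M] (μ : Measure M)
    (ξ g gdag gobs : M → ℝ) (M₁ M₂ : Set M) (ε η : ℝ)
    (hM₂ : MeasurableSet M₂)
    (hunion : M₁ ∪ M₂ = Set.univ) (hdisj : Disjoint M₁ M₂)
    (hξ : Integrable ξ μ) (hg : Integrable g μ) (hgdag : Integrable gdag μ)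
    (hLinf : MemLp (fun x => g x - gdag x) ⊤ μ)
    (hε : ∫ x in M₁, |ξ x| ∂μ ≤ ε)
    (hη : μ M₂ ≤ ENNReal.ofReal η) (hη0 : 0 ≤ η)
    (hobs : ∀ x, gobs x = gdag x + ξ x) :
    (∫ x, |g x - gobs x| ∂μ) - ∫ x, |ξ x| ∂μ ≥
      (∫ x, |g x - gdag x| ∂μ) -
        2 * (ε + η * (eLpNorm (fun x => g x - gdag x) ⊤ (μ.restrict M₂)).toReal) := by
  set C := (eLpNorm (fun x => g x - gdag x) ⊤ (μ.restrict M₂)).toReal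
  have hM₁ : M₁ = M₂ᶜ := IsCompl.eq_compl ⟨hdisj, codisjoint_iff.mpr hunion⟩
  have residual : ∀ x, g x - gobs x = (g x - gdag x) - ξ x := fun x => by rw [hobs]; ring
  have split := le_integral_norm_sub_sub_integral_norm (hg.sub hgdag) hξ hM₂
  have on_M₂ : ∫ x in M₂, |g x - gdag x| ∂μ ≤ η * C := calc
    _ ≤ μ.real M₂ * C := setIntegral_norm_le_measureReal_mul_eLpNorm_top
          (hη.trans_lt ENNReal.ofReal_lt_top) (hLinf.restrict M₂)
    _ ≤ η * C := by
      gcongr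
      exact ENNReal.toReal_le_of_le_ofReal hη0 hη
  simp only [Real.norm_eq_abs, Pi.sub_apply, ← hM₁] at split
  simp only [residual]
  linarith

theorem impulsive_noise_data_error_bound
    {M : Type*} [MeasurableSpace M] (μ : Measure M)
    (ξ g gdag gobs : M → ℝ) (M₁ M₂ : Set M) (ε η : ℝ)
    (hM₁ : MeasurableSet M₁) (hM₂ : MeasurableSet M₂)
    (hunion : M₁ ∪ M₂ = Set.univ) (hdisj : Disjoint M₁ M₂)
    (hξ : Integrable ξ μ) (hg : Integrable g μ) (hgdag : Integrable gdag μ)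
    (hLinf : MemLp (fun x => g x - gdag x) ⊤ μ)
    (hε : ∫ x in M₁, |ξ x| ∂μ ≤ ε)
    (hη : μ M₂ ≤ ENNReal.ofReal η) (hη0 : 0 ≤ η)
    (hobs : ∀ x, gobs x = gdag x + ξ x) :
    (∫ x, |g x - gobs x| ∂μ) - ∫ x, |ξ x| ∂μ ≥
      (∫ x, |g x - gdag x| ∂μ) -
        2 * (ε + η * (eLpNorm (fun x => g x - gdag x) ⊤ (μ.restrict M₂)).toReal) :=
  impulsive_noise_data_error_bound_general μ ξ g gdag gobs M₁ M₂ ε η hM₂ hunion hdisj hξ hg hgdag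
    hLinf hε hη hη0 hobs
end

section
/- Under the assumptions of the previous statement, assume additionally the variational source condition β·D(u) ≤ R(u) - R(u†) + φ(‖F(u) - g†‖_Y^r) for all u ∈ dom R, where β > 0, D is the Bregman distance of R at u† with respect to some subgradient, and φ is a concave index function. Then for each minimizer u_α of the Tikhonov functional: β·D(u_α) ≤ err(F(u_α))/(rα) + ψ(r C_err α), where ψ(α) := sup_{τ≥0}(-τ/α + φ(τ)). -/
open Set

/-!
Comparing the Tikhonov functional at `uα` with its value at `u†` and inserting the noise model
bounds `R uα - R u†` by `err (F uα) / (r α) - τ / (r Cerr α)` with `τ = ‖F uα - g†‖ ^ r`.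
Adding `φ τ` turns the variational source condition at `uα` into the claim, since
`-τ / (r Cerr α) + φ τ` is one of the terms of the supremum defining `ψ (r Cerr α)`.
-/

theorem sub_le_of_penalized_le_of_misfit_gap {a b s e R₁ R₀ C α r : ℝ} (hαr : 0 ≤ α * r)
    (hmin : 1 / (α * r) * a + R₁ ≤ 1 / (α * r) * b + R₀) (hnoise : 1 / C * s - e ≤ a - b) :
    R₁ - R₀ ≤ e / (r * α) - s / (r * C * α) :=
  calc R₁ - R₀ ≤ 1 / (α * r) * (b - a) := by linarith
    _ ≤ 1 / (α * r) * (e - 1 / C * s) :=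
        mul_le_mul_of_nonneg_left (by linarith) (one_div_nonneg.2 hαr)
    _ = e / (r * α) - s / (r * C * α) := by ring

theorem EReal.coe_le_coe_add_iSup_of_le {ι : Type*} {x e : ℝ} {f : ι → ℝ} (i : ι)
    (h : x ≤ e + f i) : (x : EReal) ≤ e + ⨆ j, (f j : EReal) :=
  calc (x : EReal) ≤ ((e + f i : ℝ) : EReal) := EReal.coe_le_coe_iff.2 h
    _ = e + (f i : EReal) := EReal.coe_add e (f i)
    _ ≤ e + ⨆ j, (f j : EReal) := add_le_add le_rfl (le_iSup (fun j => (f j : EReal)) i)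

theorem tikhonov_error_decomposition_bregman_general
    {X Y : Type*} [NormedAddCommGroup X] [NormedSpace ℝ X] [NormedAddCommGroup Y]
    (domR : Set X) (F : X → Y) (R : X → ℝ) (err : Y → ℝ)
    (udag : X) (gdag gobs : Y) (Cerr r α β : ℝ) (φ : ℝ → ℝ)
    (D : X → ℝ)
    (hudag : udag ∈ domR) (hgdag : gdag = F udag)
    (hr : 1 ≤ r) (hα : 0 < α)
    (hnoise : ∀ u ∈ domR,
      ‖F u - gobs‖ ^ r - ‖gdag - gobs‖ ^ r ≥ (1 / Cerr) * ‖F u - gdag‖ ^ r - err (F u))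
    (hvsc : ∀ u ∈ domR, β * D u ≤ R u - R udag + φ (‖F u - gdag‖ ^ r))
    (ψ : ℝ → EReal)
    (hψ : ∀ t : ℝ, ψ t = ⨆ τ : Ici (0:ℝ), ((-(τ : ℝ) / t + φ τ : ℝ) : EReal))
    (uα : X) (huα : uα ∈ domR)
    (hmin : ∀ u ∈ domR,
      (1 / (α * r)) * ‖F uα - gobs‖ ^ r + R uα ≤ (1 / (α * r)) * ‖F u - gobs‖ ^ r + R u) :
    ((β * D uα : ℝ) : EReal) ≤ ((err (F uα) / (r * α) : ℝ) : EReal) + ψ (r * Cerr * α) := by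
  have hmin_udag := hmin udag hudag
  rw [← hgdag] at hmin_udag
  have hgap : R uα - R udag ≤ err (F uα) / (r * α) - ‖F uα - gdag‖ ^ r / (r * Cerr * α) :=
    sub_le_of_penalized_le_of_misfit_gap (mul_pos hα (by linarith)).le hmin_udag (hnoise uα huα)
  rw [hψ]
  refine EReal.coe_le_coe_add_iSup_of_le ⟨_, Real.rpow_nonneg (norm_nonneg (F uα - gdag)) r⟩ ?_
  dsimp only
  rw [neg_div]
  linarith [hvsc uα huα]

theorem tikhonov_error_decomposition_bregman
    {X Y : Type*} [NormedAddCommGroup X] [NormedSpace ℝ X] [NormedAddCommGroup Y]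
    (domR : Set X) (F : X → Y) (R : X → ℝ) (err : Y → ℝ)
    (udag : X) (gdag gobs : Y) (Cerr r α β : ℝ) (ustar : X →L[ℝ] ℝ) (φ : ℝ → ℝ)
    (D : X → ℝ) (hD : ∀ u, D u = R u - R udag - ustar (u - udag))
    (hudag : udag ∈ domR) (hgdag : gdag = F udag)
    (hCerr : 0 < Cerr) (hr : 1 ≤ r) (hα : 0 < α) (hβ : 0 < β)
    (hnoise : ∀ u ∈ domR,
      ‖F u - gobs‖ ^ r - ‖gdag - gobs‖ ^ r ≥ (1 / Cerr) * ‖F u - gdag‖ ^ r - err (F u))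
    (hφconc : ConcaveOn ℝ (Ici 0) φ) (hφmono : MonotoneOn φ (Ici 0))
    (hφ0 : φ 0 = 0) (hφnonneg : ∀ t ∈ Ici (0:ℝ), 0 ≤ φ t)
    (hvsc : ∀ u ∈ domR, β * D u ≤ R u - R udag + φ (‖F u - gdag‖ ^ r))
    (ψ : ℝ → EReal)
    (hψ : ∀ t : ℝ, ψ t = ⨆ τ : Ici (0:ℝ), ((-(τ : ℝ) / t + φ τ : ℝ) : EReal))
    (uα : X) (huα : uα ∈ domR)
    (hmin : ∀ u ∈ domR,
      (1 / (α * r)) * ‖F uα - gobs‖ ^ r + R uα ≤ (1 / (α * r)) * ‖F u - gobs‖ ^ r + R u) :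
    ((β * D uα : ℝ) : EReal) ≤ ((err (F uα) / (r * α) : ℝ) : EReal) + ψ (r * Cerr * α) :=
  tikhonov_error_decomposition_bregman_general domR F R err udag gdag gobs Cerr r α β φ D hudag
    hgdag hr hα hnoise hvsc ψ hψ uα huα hmin
end

section
/- Let φ : [0,∞) → [0,∞) be an index function (concave, increasing, φ(0)=0) such that φ^{1+δ} is concave for some δ > 0. Define ψ(α) := sup_{τ≥0}(-τ/α + φ(τ)) for α > 0. Then for all C ≥ 1 and t > 0, ψ(C·t) ≤ C^{1/δ}·ψ(t). -/
/-!
Concavity of `φ ^ (1 + δ)` on `[0, ∞)` together with `φ ≥ 0` gives the growth bound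
`φ τ ≤ K * φ (τ / K ^ (1 + δ))` for `K ≥ 1`. With `K = C ^ (1 / δ)` one has `K ^ (1 + δ) = C * K`,
so the substitution `τ ↦ τ / (C * K)` in the supremum defining `ψ (C * t)` bounds each of its
terms by `K` times a term of the supremum defining `ψ t`.
-/

open Set

noncomputable def approxError (φ : ℝ → ℝ) (t : ℝ) : EReal :=
  ⨆ τ : Ici (0:ℝ), ((-(τ : ℝ) / t + φ τ : ℝ) : EReal)

lemma ConcaveOn.mul_le_map_mul {g : ℝ → ℝ} (hg : ConcaveOn ℝ (Ici 0) g) (hg0 : 0 ≤ g 0)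
    {a x : ℝ} (ha₀ : 0 ≤ a) (ha₁ : a ≤ 1) (hx : 0 ≤ x) : a * g x ≤ g (a * x) := by
  have hconc := hg.2 (mem_Ici.mpr hx) self_mem_Ici ha₀ (sub_nonneg.mpr ha₁) (add_sub_cancel a 1)
  simp only [smul_eq_mul, mul_zero, add_zero] at hconc
  linarith [mul_nonneg (sub_nonneg.mpr ha₁) hg0]

lemma le_mul_map_div_rpow_of_concaveOn_rpow {φ : ℝ → ℝ} {p : ℝ} (hp : 0 < p)
    (hφ : ConcaveOn ℝ (Ici 0) (fun t => φ t ^ p))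
    (hφnonneg : ∀ t ∈ Ici (0:ℝ), 0 ≤ φ t) {K x : ℝ} (hK : 1 ≤ K) (hx : 0 ≤ x) :
    φ x ≤ K * φ (x / K ^ p) := by
  have hKpos : 0 < K := zero_lt_one.trans_le hK
  have hKp : 1 ≤ K ^ p := Real.one_le_rpow hK hp.le
  have hconc : (K ^ p)⁻¹ * φ x ^ p ≤ φ ((K ^ p)⁻¹ * x) ^ p :=
    hφ.mul_le_map_mul (Real.rpow_nonneg (hφnonneg 0 self_mem_Ici) p) (by positivity)
      (inv_le_one_of_one_le₀ hKp) hx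
  have hroot : K⁻¹ * φ x ≤ φ ((K ^ p)⁻¹ * x) := by
    have hφx := hφnonneg x hx
    have hφy := hφnonneg _ (mul_nonneg (inv_nonneg.mpr (zero_le_one.trans hKp)) hx)
    refine (Real.rpow_le_rpow_iff (mul_nonneg (inv_nonneg.mpr hKpos.le) hφx) hφy hp).mp ?_
    rwa [Real.mul_rpow (by positivity) hφx, Real.inv_rpow hKpos.le]
  rw [div_eq_inv_mul]
  calc φ x = K * (K⁻¹ * φ x) := by field_simp
    _ ≤ K * φ ((K ^ p)⁻¹ * x) := mul_le_mul_of_nonneg_left hroot hKpos.le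

lemma approxError_mul_le {φ : ℝ → ℝ} {C K : ℝ} (hC : 0 < C) (hK : 0 < K)
    (hφ : ∀ τ, 0 ≤ τ → φ τ ≤ K * φ (τ / (C * K))) (t : ℝ) :
    approxError φ (C * t) ≤ K * approxError φ t := by
  refine iSup_le fun ⟨τ, hτ⟩ => ?_
  have hσ : τ / (C * K) ∈ Ici (0:ℝ) := div_nonneg hτ (mul_pos hC hK).le
  have hterm : -τ / (C * t) + φ τ ≤ K * (-(τ / (C * K)) / t + φ (τ / (C * K))) := by
    have hlin : K * (-(τ / (C * K)) / t) = -τ / (C * t) := by field_simp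
    linarith [hφ τ hτ]
  calc ((-τ / (C * t) + φ τ : ℝ) : EReal)
      ≤ ((K * (-(τ / (C * K)) / t + φ (τ / (C * K))) : ℝ) : EReal) := EReal.coe_le_coe hterm
    _ = (K : EReal) * ((-(τ / (C * K)) / t + φ (τ / (C * K)) : ℝ) : EReal) := EReal.coe_mul _ _
    _ ≤ K * approxError φ t := by
        gcongr
        exact le_iSup (fun τ : Ici (0:ℝ) => ((-(τ : ℝ) / t + φ τ : ℝ) : EReal)) ⟨_, hσ⟩

lemma rpow_one_div_rpow_one_add {C δ : ℝ} (hC : 0 < C) (hδ : δ ≠ 0) :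
    (C ^ (1 / δ)) ^ (1 + δ) = C * C ^ (1 / δ) := by
  rw [Real.rpow_add (Real.rpow_pos_of_pos hC _), Real.rpow_one, ← Real.rpow_mul hC.le,
    one_div_mul_cancel hδ, Real.rpow_one, mul_comm]

theorem psi_scaling_general (φ : ℝ → ℝ) (δ : ℝ) (hδ : 0 < δ)
    (hφnonneg : ∀ t ∈ Ici (0:ℝ), 0 ≤ φ t)
    (hpow : ConcaveOn ℝ (Ici 0) (fun t => φ t ^ (1 + δ)))
    (ψ : ℝ → EReal)
    (hψ : ∀ t : ℝ, ψ t = ⨆ τ : Ici (0:ℝ), ((-(τ : ℝ) / t + φ τ : ℝ) : EReal)) :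
    ∀ C t : ℝ, 1 ≤ C → 0 < t →
      ψ (C * t) ≤ ((C ^ ((1:ℝ) / δ) : ℝ) : EReal) * ψ t := by
  intro C t hC _
  have hCpos : 0 < C := zero_lt_one.trans_le hC
  have hK : 1 ≤ C ^ (1 / δ) := Real.one_le_rpow hC (by positivity)
  have hgrowth : ∀ τ, 0 ≤ τ → φ τ ≤ C ^ (1 / δ) * φ (τ / (C * C ^ (1 / δ))) := fun τ hτ => by
    rw [← rpow_one_div_rpow_one_add hCpos hδ.ne']
    exact le_mul_map_div_rpow_of_concaveOn_rpow (by linarith) hpow hφnonneg hK hτ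
  rw [show ψ = approxError φ from funext hψ]
  exact approxError_mul_le hCpos (by linarith) hgrowth t

theorem psi_scaling (φ : ℝ → ℝ) (δ : ℝ) (hδ : 0 < δ)
    (hφconc : ConcaveOn ℝ (Ici 0) φ) (hφmono : MonotoneOn φ (Ici 0))
    (hφ0 : φ 0 = 0) (hφnonneg : ∀ t ∈ Ici (0:ℝ), 0 ≤ φ t)
    (hpow : ConcaveOn ℝ (Ici 0) (fun t => φ t ^ (1 + δ)))
    (ψ : ℝ → EReal)
    (hψ : ∀ t : ℝ, ψ t = ⨆ τ : Ici (0:ℝ), ((-(τ : ℝ) / t + φ τ : ℝ) : EReal)) :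
    ∀ C t : ℝ, 1 ≤ C → 0 < t →
      ψ (C * t) ≤ ((C ^ ((1:ℝ) / δ) : ℝ) : EReal) * ψ t :=
  psi_scaling_general φ δ hδ hφnonneg hpow ψ hψ
end
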